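/- In a signature split into disjoint sub-signatures, every formula is logically equivalent to a formula in generalized disjunctive normal form: a disjunction of conjunctions, where each conjunct is a formula in a single one of the sub-signatures (with at most one conjunct per sub-signature in each disjunct). -/

import Mathlib

set_option autoImplicit false

/-- A many-sorted first-order signature. -/
structure MSSignature : Type 1 where
  Sorts : Type
  Func : Type
  Pred : Type
  funcDom : Func → List Sorts
  funcCod : Func → Sorts
  predDom : Pred → List Sorts

namespace MS

variable (Sg : MSSignature)

/-- Many-sorted terms; variables of each sort are indexed by naturals. -/
inductive Term : Sg.Sorts → Type where
  | var (s : Sg.Sorts) (n : ℕ) : Term s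
  | app (f : Sg.Func)
      (args : ∀ i : Fin (Sg.funcDom f).length, Term ((Sg.funcDom f).get i)) :
      Term (Sg.funcCod f)

/-- Many-sorted first-order formulas. -/
inductive Formula : Type where
  | eq {s : Sg.Sorts} (t u : Term Sg s) : Formula
  | pred (P : Sg.Pred)
      (args : ∀ i : Fin (Sg.predDom P).length, Term Sg ((Sg.predDom P).get i)) : Formula
  | falsum : Formula
  | imp (φ ψ : Formula) : Formula
  | all (s : Sg.Sorts) (n : ℕ) (φ : Formula) : Formula

/-- A structure for a many-sorted signature: each sort gets a nonempty domain. -/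
structure Structure : Type 1 where
  dom : Sg.Sorts → Type
  dom_nonempty : ∀ s, Nonempty (dom s)
  interpFunc : ∀ f : Sg.Func,
    (∀ i : Fin (Sg.funcDom f).length, dom ((Sg.funcDom f).get i)) → dom (Sg.funcCod f)
  interpPred : ∀ P : Sg.Pred,
    (∀ i : Fin (Sg.predDom P).length, dom ((Sg.predDom P).get i)) → Prop

variable {Sg}

/-- Variable assignments. -/
def Assign (A : Structure Sg) : Type := ∀ s : Sg.Sorts, ℕ → A.dom s

open Classical in
noncomputable
def Assign.update {A : Structure Sg} (ν : Assign A) (s : Sg.Sorts) (n : ℕ) (a : A.dom s) :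
    Assign A := fun t m =>
  if h : s = t then (if m = n then h ▸ a else ν t m) else ν t m

def Term.eval {A : Structure Sg} (ν : Assign A) : ∀ {s : Sg.Sorts}, Term Sg s → A.dom s
  | _, .var s n => ν s n
  | _, .app f args => A.interpFunc f fun i => Term.eval ν (args i)

/-- Tarskian satisfaction. -/
def Sat (A : Structure Sg) (ν : Assign A) : Formula Sg → Prop
  | .eq t u => t.eval ν = u.eval ν
  | .pred P args => A.interpPred P fun i => (args i).eval ν
  | .falsum => False
  | .imp φ ψ => Sat A ν φ → Sat A ν ψ
  | .all s n φ => ∀ a : A.dom s, Sat A (ν.update s n a) φ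

/-- Derived connectives. -/
def Formula.not (φ : Formula Sg) : Formula Sg := .imp φ .falsum
def Formula.and (φ ψ : Formula Sg) : Formula Sg := (Formula.imp φ ψ.not).not
def Formula.or (φ ψ : Formula Sg) : Formula Sg := .imp φ.not ψ
def Formula.ex (s : Sg.Sorts) (n : ℕ) (φ : Formula Sg) : Formula Sg :=
  ((Formula.all s n φ.not)).not
def Formula.andList : List (Formula Sg) → Formula Sg :=
  List.foldr Formula.and (Formula.not .falsum)
def Formula.orList : List (Formula Sg) → Formula Sg :=
  List.foldr Formula.or .falsum

/-- Occurrence of variable `(s, n)` in a term. -/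
def Term.varOccurs (s : Sg.Sorts) (n : ℕ) : ∀ {t : Sg.Sorts}, Term Sg t → Prop
  | _, .var s' n' => s = s' ∧ n = n'
  | _, .app _ args => ∃ i, Term.varOccurs s n (args i)

/-- Free occurrence of variable `(s, n)` in a formula. -/
def Formula.varFree (s : Sg.Sorts) (n : ℕ) : Formula Sg → Prop
  | .eq t u => t.varOccurs s n ∨ u.varOccurs s n
  | .pred _ args => ∃ i, (args i).varOccurs s n
  | .falsum => False
  | .imp φ ψ => φ.varFree s n ∨ ψ.varFree s n
  | .all s' n' φ => φ.varFree s n ∧ ¬(s = s' ∧ n = n')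

def Formula.IsSentence (φ : Formula Sg) : Prop := ∀ s n, ¬ φ.varFree s n

/-- Quantifier-free formulas. -/
def Formula.IsQF : Formula Sg → Prop
  | .eq _ _ => True
  | .pred _ _ => True
  | .falsum => True
  | .imp φ ψ => φ.IsQF ∧ ψ.IsQF
  | .all _ _ _ => False

/-- A structure is a model of a set of formulas (a theory) if it satisfies
every axiom under every assignment. -/
def Models (A : Structure Sg) (T : Set (Formula Sg)) : Prop :=
  ∀ φ ∈ T, ∀ ν : Assign A, Sat A ν φ

/-- Elementary equivalence: same sentences hold. -/
def ElemEquiv (A B : Structure Sg) : Prop :=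
  ∀ φ : Formula Sg, φ.IsSentence →
    ((∀ ν : Assign A, Sat A ν φ) ↔ (∀ ν : Assign B, Sat B ν φ))

/-- Substructures: sort-wise subsets closed under the functions. -/
structure Substructure (A : Structure Sg) : Type 1 where
  carrier : ∀ s : Sg.Sorts, Set (A.dom s)
  carrier_nonempty : ∀ s, (carrier s).Nonempty
  closed : ∀ (f : Sg.Func)
    (args : ∀ i : Fin (Sg.funcDom f).length, A.dom ((Sg.funcDom f).get i)),
    (∀ i, args i ∈ carrier _) → A.interpFunc f args ∈ carrier _

/-- The induced structure on a substructure. -/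
def Substructure.toStructure {A : Structure Sg} (B : Substructure A) : Structure Sg where
  dom s := ↥(B.carrier s)
  dom_nonempty s := ⟨⟨(B.carrier_nonempty s).choose, (B.carrier_nonempty s).choose_spec⟩⟩
  interpFunc f args :=
    ⟨A.interpFunc f fun i => (args i).1, B.closed f _ fun i => (args i).2⟩
  interpPred P args := A.interpPred P fun i => (args i).1

/-- View an assignment into a substructure as an assignment into the ambient structure. -/
def Substructure.amb {A : Structure Sg} (B : Substructure A)
    (ν : Assign B.toStructure) : Assign A := fun s n => (ν s n).1

/-- `B` is an elementary substructure of `A`. -/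
def Substructure.IsElementary {A : Structure Sg} (B : Substructure A) : Prop :=
  ∀ (φ : Formula Sg) (ν : Assign B.toStructure),
    Sat B.toStructure ν φ ↔ Sat A (B.amb ν) φ

/-- Isomorphisms of structures. -/
structure Iso (A B : Structure Sg) : Type 1 where
  toEquiv : ∀ s, A.dom s ≃ B.dom s
  map_func : ∀ (f : Sg.Func) args,
    toEquiv _ (A.interpFunc f args) = B.interpFunc f (fun i => toEquiv _ (args i))
  map_pred : ∀ (P : Sg.Pred) args,
    A.interpPred P args ↔ B.interpPred P (fun i => toEquiv _ (args i))

end MS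

/-- The cardinality of a signature: sorts + function symbols + predicate symbols. -/
noncomputable def MSSignature.card (Sg : MSSignature) : Cardinal :=
  Cardinal.mk Sg.Sorts + Cardinal.mk Sg.Func + Cardinal.mk Sg.Pred

/-- A countable signature. -/
def MSSignature.IsCountable (Sg : MSSignature) : Prop :=
  Countable Sg.Sorts ∧ Countable Sg.Func ∧ Countable Sg.Pred

namespace MS

variable {Sg : MSSignature}

/-- A splitting of a signature by a partition `Λ` of its sorts: every function and
predicate symbol uses sorts from a single part only. -/
structure Split (Sg : MSSignature) (Λ : Type) where
  sortPart : Sg.Sorts → Λ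
  funcPart : Sg.Func → Λ
  predPart : Sg.Pred → Λ
  func_dom : ∀ (f : Sg.Func) (i : Fin (Sg.funcDom f).length),
    sortPart ((Sg.funcDom f).get i) = funcPart f
  func_cod : ∀ f : Sg.Func, sortPart (Sg.funcCod f) = funcPart f
  pred_dom : ∀ (P : Sg.Pred) (i : Fin (Sg.predDom P).length),
    sortPart ((Sg.predDom P).get i) = predPart P

/-- A term lies in the sub-signature `Σ_l`. -/
def Term.inPart {Λ : Type} (sp : Split Sg Λ) (l : Λ) :
    ∀ {s : Sg.Sorts}, Term Sg s → Prop
  | s, .var _ _ => sp.sortPart s = l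
  | _, .app f args => sp.funcPart f = l ∧ ∀ i, Term.inPart sp l (args i)

/-- A formula lies in the sub-signature `Σ_l`: all its symbols and the sorts of all
its variables belong to the part `l`. -/
def Formula.inPart {Λ : Type} (sp : Split Sg Λ) (l : Λ) : Formula Sg → Prop
  | .eq (s := s) t u => sp.sortPart s = l ∧ t.inPart sp l ∧ u.inPart sp l
  | .pred P args => sp.predPart P = l ∧ ∀ i, (args i).inPart sp l
  | .falsum => True
  | .imp φ ψ => φ.inPart sp l ∧ ψ.inPart sp l
  | .all s _ φ => sp.sortPart s = l ∧ φ.inPart sp l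

/-- A generalized `Λ`-cube: a conjunction of formulas, each over a single
sub-signature, with pairwise distinct parts. -/
def Formula.IsGenCube {Λ : Type} (sp : Split Sg Λ) (φ : Formula Sg) : Prop :=
  ∃ L : List (Λ × Formula Sg), (L.map Prod.fst).Nodup ∧
    (∀ p ∈ L, (p.2).inPart sp p.1) ∧ φ = Formula.andList (L.map Prod.snd)

/-- A generalized `Λ`-clause: a disjunction of formulas, each over a single
sub-signature, with pairwise distinct parts. -/
def Formula.IsGenClause {Λ : Type} (sp : Split Sg Λ) (φ : Formula Sg) : Prop :=
  ∃ L : List (Λ × Formula Sg), (L.map Prod.fst).Nodup ∧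
    (∀ p ∈ L, (p.2).inPart sp p.1) ∧ φ = Formula.orList (L.map Prod.snd)

/-- Generalized disjunctive normal form: a disjunction of generalized cubes. -/
def Formula.IsGDNF {Λ : Type} (sp : Split Sg Λ) (φ : Formula Sg) : Prop :=
  ∃ L : List (Formula Sg), (∀ ψ ∈ L, ψ.IsGenCube sp) ∧ φ = Formula.orList L

/-- Generalized conjunctive normal form: a conjunction of generalized clauses. -/
def Formula.IsGCNF {Λ : Type} (sp : Split Sg Λ) (φ : Formula Sg) : Prop :=
  ∃ L : List (Formula Sg), (∀ ψ ∈ L, ψ.IsGenClause sp) ∧ φ = Formula.andList L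

/-- Logical equivalence of many-sorted formulas. -/
def LogEquiv (φ ψ : Formula Sg) : Prop :=
  ∀ (A : Structure Sg) (ν : Assign A), Sat A ν φ ↔ Sat A ν ψ

/-- The cardinality of the sub-signature `Σ_l` determined by a splitting. -/
noncomputable def Split.partCard {Λ : Type} (sp : Split Sg Λ) (l : Λ) : Cardinal :=
  Cardinal.mk {s : Sg.Sorts // sp.sortPart s = l} +
    Cardinal.mk {f : Sg.Func // sp.funcPart f = l} +
    Cardinal.mk {P : Sg.Pred // sp.predPart P = l}

end MS

/-! Induction on formulas, carrying a disjunction of conjunctions of formulas each tagged with a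
part of `Λ` it lies in. Negation is De Morgan followed by distribution. For `∀ = ¬∃¬`, the
existential distributes over the disjunction, and inside a conjunction only the conjuncts in the
part of the bound sort can mention the bound variable (a formula over `Σ_l` depends only on the
variables of sorts in `l`), so `∃` is pushed onto the conjunction of those. Merging the conjuncts
of each disjunct that share a part finally turns it into a generalized cube. -/

theorem List.exists_mem_sections_forall_iff {α : Type*} {P : α → Prop} (L : List (List α)) :
    (∃ f ∈ L.sections, ∀ a ∈ f, P a) ↔ ∀ l ∈ L, ∃ a ∈ l, P a := by
  induction L with
  | nil => simp
  | cons l L ih =>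
    simp only [List.sections, List.mem_flatMap, List.mem_map, List.forall_mem_cons, ← ih]
    constructor
    · rintro ⟨_, ⟨s, hs, a, ha, rfl⟩, hP⟩
      rw [List.forall_mem_cons] at hP
      exact ⟨⟨a, ha, hP.1⟩, s, hs, hP.2⟩
    · rintro ⟨⟨a, ha, hPa⟩, s, hs, hPs⟩
      exact ⟨_, ⟨s, hs, a, ha, rfl⟩, List.forall_mem_cons.2 ⟨hPa, hPs⟩⟩

theorem List.forall_mem_sections_forall {α : Type*} {P : α → Prop} {L : List (List α)}
    (h : ∀ l ∈ L, ∀ a ∈ l, P a) : ∀ f ∈ L.sections, ∀ a ∈ f, P a := by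
  induction L with
  | nil => simp
  | cons l L ih =>
    simp only [List.sections, List.mem_flatMap, List.mem_map]
    rintro _ ⟨s, hs, a, ha, rfl⟩
    rw [List.forall_mem_cons] at h ⊢
    exact ⟨h.1 a ha, ih h.2 s hs⟩

namespace MS

variable {Sg : MSSignature} {Λ : Type}

section Semantics

variable {A : Structure Sg} {ν : Assign A}

theorem sat_not {φ : Formula Sg} : Sat A ν φ.not ↔ ¬Sat A ν φ := Iff.rfl

theorem sat_and {φ ψ : Formula Sg} : Sat A ν (φ.and ψ) ↔ Sat A ν φ ∧ Sat A ν ψ := by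
  change ¬(Sat A ν φ → ¬Sat A ν ψ) ↔ _
  tauto

theorem sat_or {φ ψ : Formula Sg} : Sat A ν (φ.or ψ) ↔ Sat A ν φ ∨ Sat A ν ψ := by
  change (¬Sat A ν φ → Sat A ν ψ) ↔ _
  tauto

theorem sat_ex {s : Sg.Sorts} {n : ℕ} {φ : Formula Sg} :
    Sat A ν (φ.ex s n) ↔ ∃ a : A.dom s, Sat A (ν.update s n a) φ := by
  change ¬(∀ a, ¬Sat A (ν.update s n a) φ) ↔ _
  push Not
  rfl

theorem sat_andList {L : List (Formula Sg)} :
    Sat A ν (Formula.andList L) ↔ ∀ ψ ∈ L, Sat A ν ψ := by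
  induction L with
  | nil => exact iff_of_true id fun _ h => nomatch h
  | cons φ L ih => simp [Formula.andList, ← ih, sat_and]

theorem sat_orList {L : List (Formula Sg)} :
    Sat A ν (Formula.orList L) ↔ ∃ ψ ∈ L, Sat A ν ψ := by
  induction L with
  | nil => exact iff_of_false id (by simp)
  | cons φ L ih => simp [Formula.orList, ← ih, sat_or]

theorem Assign.update_eqOn {P : Sg.Sorts → Prop} {ν' : Assign A} (h : ∀ t, P t → ν t = ν' t)
    (s : Sg.Sorts) (n : ℕ) (a : A.dom s) :
    ∀ t, P t → ν.update s n a t = ν'.update s n a t := by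
  intro t ht
  funext m
  unfold Assign.update
  split_ifs <;> simp [h t ht]

end Semantics

section Locality

variable (sp : Split Sg Λ)

theorem Term.inPart_sortPart : ∀ {s : Sg.Sorts} (t : Term Sg s), t.inPart sp (sp.sortPart s)
  | _, .var _ _ => rfl
  | _, .app f args => ⟨(sp.func_cod f).symm, fun i => by
      rw [sp.func_cod, ← sp.func_dom f i]
      exact Term.inPart_sortPart (args i)⟩

variable {sp} {A : Structure Sg} {l : Λ} {ν ν' : Assign A}

theorem Term.eval_congr_of_inPart (h : ∀ t, sp.sortPart t = l → ν t = ν' t) :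
    ∀ {s : Sg.Sorts} (u : Term Sg s), u.inPart sp l → u.eval ν = u.eval ν'
  | _, .var s m, hu => congrFun (h s hu) m
  | _, .app f args, hu => congrArg (A.interpFunc f)
      (funext fun i => Term.eval_congr_of_inPart h (args i) (hu.2 i))

theorem sat_congr_of_inPart :
    ∀ {φ : Formula Sg} {ν ν' : Assign A}, (∀ t, sp.sortPart t = l → ν t = ν' t) →
      φ.inPart sp l → (Sat A ν φ ↔ Sat A ν' φ)
  | .eq t u, _, _, h, hφ => by
    simp only [Sat, Term.eval_congr_of_inPart h t hφ.2.1, Term.eval_congr_of_inPart h u hφ.2.2]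
  | .pred P args, _, _, h, hφ => by
    simp only [Sat, Term.eval_congr_of_inPart h _ (hφ.2 _)]
  | .falsum, _, _, _, _ => Iff.rfl
  | .imp φ ψ, _, _, h, hφ =>
    imp_congr (sat_congr_of_inPart h hφ.1) (sat_congr_of_inPart h hφ.2)
  | .all s n φ, _, _, h, hφ =>
    forall_congr' fun a => sat_congr_of_inPart (Assign.update_eqOn h s n a) hφ.2

theorem sat_update_iff_of_inPart {φ : Formula Sg} (hφ : φ.inPart sp l) {s : Sg.Sorts}
    (hs : sp.sortPart s ≠ l) (n : ℕ) (a : A.dom s) :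
    Sat A (ν.update s n a) φ ↔ Sat A ν φ := by
  refine sat_congr_of_inPart (fun t ht => ?_) hφ
  have hst : s ≠ t := by rintro rfl; exact hs ht
  funext m
  simp [Assign.update, hst]

theorem inPart_andList {L : List (Formula Sg)} (h : ∀ φ ∈ L, φ.inPart sp l) :
    (Formula.andList L).inPart sp l := by
  induction L with
  | nil => exact ⟨trivial, trivial⟩
  | cons φ L ih =>
    simp only [List.mem_cons, forall_eq_or_imp] at h
    exact ⟨⟨h.1, ih h.2, trivial⟩, trivial⟩

end Locality

section Conjunctions

variable {sp : Split Sg Λ} {A : Structure Sg} {ν : Assign A} {M : List (Λ × Formula Sg)}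

open Classical in
noncomputable def partConj (M : List (Λ × Formula Sg)) (l : Λ) : Formula Sg :=
  Formula.andList ((M.filter (·.1 = l)).map Prod.snd)

open Classical in
noncomputable def toCube (M : List (Λ × Formula Sg)) : Formula Sg :=
  Formula.andList ((M.map Prod.fst).dedup.map (partConj M))

theorem inPart_partConj (hM : ∀ p ∈ M, p.2.inPart sp p.1) (l : Λ) :
    (partConj M l).inPart sp l :=
  inPart_andList fun φ hφ => by
    simp only [List.mem_map, List.mem_filter, decide_eq_true_eq] at hφ
    obtain ⟨p, ⟨hp, rfl⟩, rfl⟩ := hφ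
    exact hM p hp

theorem sat_partConj {l : Λ} : Sat A ν (partConj M l) ↔ ∀ p ∈ M, p.1 = l → Sat A ν p.2 := by
  simp only [partConj, sat_andList, List.mem_map, List.mem_filter, decide_eq_true_eq]
  grind

open Classical in
theorem isGenCube_toCube (hM : ∀ p ∈ M, p.2.inPart sp p.1) : (toCube M).IsGenCube sp := by
  refine ⟨(M.map Prod.fst).dedup.map fun l => (l, partConj M l), ?_, ?_, ?_⟩
  · simpa [Function.comp_def] using List.nodup_dedup _
  · simp only [List.mem_map]
    rintro _ ⟨l, -, rfl⟩
    exact inPart_partConj hM l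
  · simp [toCube, Function.comp_def]

open Classical in
theorem sat_toCube : Sat A ν (toCube M) ↔ ∀ p ∈ M, Sat A ν p.2 := by
  simp only [toCube, sat_andList, List.forall_mem_map, List.mem_dedup, sat_partConj]
  exact ⟨fun h p hp => h p hp p hp rfl, fun h _ _ p hp _ => h p hp⟩

open Classical in
noncomputable def exConj (sp : Split Sg Λ) (s : Sg.Sorts) (n : ℕ) (M : List (Λ × Formula Sg)) :
    List (Λ × Formula Sg) :=
  (sp.sortPart s, (partConj M (sp.sortPart s)).ex s n) :: M.filter (·.1 ≠ sp.sortPart s)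

theorem inPart_exConj (hM : ∀ p ∈ M, p.2.inPart sp p.1) (s : Sg.Sorts) (n : ℕ) :
    ∀ q ∈ exConj sp s n M, q.2.inPart sp q.1 := by
  simp only [exConj, List.forall_mem_cons, List.mem_filter]
  exact ⟨⟨⟨rfl, inPart_partConj hM _, trivial⟩, trivial⟩, fun p hp => hM p hp.1⟩

theorem sat_exConj (hM : ∀ p ∈ M, p.2.inPart sp p.1) {s : Sg.Sorts} {n : ℕ} :
    (∀ q ∈ exConj sp s n M, Sat A ν q.2) ↔
      ∃ a : A.dom s, ∀ p ∈ M, Sat A (ν.update s n a) p.2 := by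
  have hinv : ∀ a, ∀ p ∈ M, p.1 ≠ sp.sortPart s →
      (Sat A (ν.update s n a) p.2 ↔ Sat A ν p.2) :=
    fun a p hp hne => sat_update_iff_of_inPart (hM p hp) (Ne.symm hne) n a
  simp only [exConj, List.forall_mem_cons, sat_ex, sat_partConj, List.mem_filter,
    decide_eq_true_eq, and_imp]
  constructor
  · rintro ⟨⟨a, ha⟩, hrest⟩
    refine ⟨a, fun p hp => ?_⟩
    by_cases hl : p.1 = sp.sortPart s
    · exact ha p hp hl
    · exact (hinv a p hp hl).2 (hrest p hp hl)
  · rintro ⟨a, ha⟩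
    exact ⟨⟨a, fun p hp _ => ha p hp⟩, fun p hp hl => (hinv a p hp hl).1 (ha p hp)⟩

end Conjunctions

section DNF

variable {sp : Split Sg Λ} {A : Structure Sg} {ν : Assign A} {D : List (List (Λ × Formula Sg))}

def SatDNF (A : Structure Sg) (ν : Assign A) (D : List (List (Λ × Formula Sg))) : Prop :=
  ∃ M ∈ D, ∀ p ∈ M, Sat A ν p.2

theorem satDNF_append {D' : List (List (Λ × Formula Sg))} :
    SatDNF A ν (D ++ D') ↔ SatDNF A ν D ∨ SatDNF A ν D' := by
  simp only [SatDNF, List.mem_append, or_and_right, exists_or]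

/-- A section picks one negated conjunct from each disjunct. -/
def negDNF (D : List (List (Λ × Formula Sg))) : List (List (Λ × Formula Sg)) :=
  (D.map (List.map fun p => (p.1, p.2.not))).sections

theorem inPart_negDNF (hD : ∀ M ∈ D, ∀ p ∈ M, p.2.inPart sp p.1) :
    ∀ M ∈ negDNF D, ∀ p ∈ M, p.2.inPart sp p.1 := by
  refine List.forall_mem_sections_forall ?_
  simp only [List.forall_mem_map]
  exact fun M hM p hp => ⟨hD M hM p hp, trivial⟩

theorem satDNF_negDNF : SatDNF A ν (negDNF D) ↔ ¬SatDNF A ν D := by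
  rw [SatDNF, SatDNF, negDNF, List.exists_mem_sections_forall_iff]
  simp only [List.forall_mem_map]
  simp only [List.mem_map, exists_exists_and_eq_and, sat_not, not_exists, not_and, not_forall,
    exists_prop]

noncomputable def exDNF (sp : Split Sg Λ) (s : Sg.Sorts) (n : ℕ)
    (D : List (List (Λ × Formula Sg))) : List (List (Λ × Formula Sg)) :=
  D.map (exConj sp s n)

theorem inPart_exDNF (hD : ∀ M ∈ D, ∀ p ∈ M, p.2.inPart sp p.1) (s : Sg.Sorts) (n : ℕ) :
    ∀ M ∈ exDNF sp s n D, ∀ p ∈ M, p.2.inPart sp p.1 := by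
  simp only [exDNF, List.mem_map]
  rintro _ ⟨M, hM, rfl⟩
  exact inPart_exConj (hD M hM) s n

theorem satDNF_exDNF (hD : ∀ M ∈ D, ∀ p ∈ M, p.2.inPart sp p.1) {s : Sg.Sorts} {n : ℕ} :
    SatDNF A ν (exDNF sp s n D) ↔ ∃ a : A.dom s, SatDNF A (ν.update s n a) D := by
  simp only [SatDNF, exDNF, List.mem_map, exists_exists_and_eq_and]
  constructor
  · rintro ⟨M, hM, hsat⟩
    obtain ⟨a, ha⟩ := (sat_exConj (hD M hM)).1 hsat
    exact ⟨a, M, hM, ha⟩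
  · rintro ⟨a, M, hM, ha⟩
    exact ⟨M, hM, (sat_exConj (hD M hM)).2 ⟨a, ha⟩⟩

theorem exists_dnf (sp : Split Sg Λ) : ∀ φ : Formula Sg,
    ∃ D : List (List (Λ × Formula Sg)), (∀ M ∈ D, ∀ p ∈ M, p.2.inPart sp p.1) ∧
      ∀ (A : Structure Sg) (ν : Assign A), Sat A ν φ ↔ SatDNF A ν D
  | .eq (s := s) t u =>
    ⟨[[(sp.sortPart s, .eq t u)]],
      by simpa using ⟨rfl, Term.inPart_sortPart sp t, Term.inPart_sortPart sp u⟩,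
      fun _ _ => by simp [SatDNF]⟩
  | .pred P args =>
    ⟨[[(sp.predPart P, .pred P args)]],
      by simpa using ⟨rfl, fun i => sp.pred_dom P i ▸ Term.inPart_sortPart sp (args i)⟩,
      fun _ _ => by simp [SatDNF]⟩
  | .falsum => ⟨[], by simp, fun _ _ => iff_of_false id (by simp [SatDNF])⟩
  | .imp φ ψ => by
    obtain ⟨D₁, hD₁, h₁⟩ := exists_dnf sp φ
    obtain ⟨D₂, hD₂, h₂⟩ := exists_dnf sp ψ
    refine ⟨negDNF D₁ ++ D₂, ?_, fun A ν => ?_⟩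
    · simpa only [List.forall_mem_append] using ⟨inPart_negDNF hD₁, hD₂⟩
    · rw [satDNF_append, satDNF_negDNF, ← h₁, ← h₂, ← imp_iff_not_or]
      rfl
  | .all s n φ => by
    obtain ⟨D, hD, h⟩ := exists_dnf sp φ
    refine ⟨negDNF (exDNF sp s n (negDNF D)), inPart_negDNF (inPart_exDNF (inPart_negDNF hD) s n),
      fun A ν => ?_⟩
    simp only [satDNF_negDNF, satDNF_exDNF (inPart_negDNF hD), ← h, not_exists, not_not]
    rfl

end DNF

end MS

open MS

/-- In a split signature, every formula is logically equivalent to one in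
generalized disjunctive normal form. -/
theorem split_GDNF {Sg : MSSignature} {Λ : Type} (sp : Split Sg Λ) (φ : Formula Sg) :
    ∃ ψ : Formula Sg, ψ.IsGDNF sp ∧ LogEquiv φ ψ := by
  obtain ⟨D, hD, hφ⟩ := exists_dnf sp φ
  refine ⟨Formula.orList (D.map toCube), ⟨_, ?_, rfl⟩, fun A ν => ?_⟩
  · simp only [List.mem_map]
    rintro _ ⟨M, hM, rfl⟩
    exact isGenCube_toCube (hD M hM)
  · simp only [hφ, SatDNF, sat_orList, List.mem_map, exists_exists_and_eq_and, sat_toCube]
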